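/- For each integer n ≥ 1, consider a recursive estimation process (θ̂_t^{(n)})_{t≥0} with θ̂_0^{(n)} = θ* and per-step conditional tail bound with rate function r(m) = m^κ, where κ ≥ γ/2, sample sizes n_0 = n, n_t = c_t·n with c_t = t^{1+s} for some s > 0, and which additionally is a martingale: E[θ̂_t^{(n)} | F_{t−1}] = θ̂_{t−1}^{(n)} almost surely for every t ≥ 1. Then for every δ > 0, lim_{n→∞} limsup_{T→∞} P(‖θ̂_T^{(n)} − θ*‖₂ ≥ δ) = 0. -/

import Mathlib

/-! Integrating the conditional tail bound gives `P(‖Δₜ‖ > u) ≤ C₁ exp(-C₂ (cₜ n)^κ u^γ)` for the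
increments `Δₜ = θ̂ₜ₊₁ - θ̂ₜ`, and the layer-cake formula with the Gamma integral turns this into
`E‖Δₜ‖² ≤ M (cₜ n)^(-2κ/γ) ≤ M / (cₜ n)` with `M` depending only on `C₁, C₂, γ`, since `2κ ≥ γ`
and `cₜ n ≥ 1`. Increments of a square integrable martingale are orthogonal in `L²`, so
`E‖θ̂_T - θ*‖² = ∑_{t<T} E‖Δₜ‖² ≤ (M ∑ₜ cₜ⁻¹) / n` uniformly in `T`, where `∑ₜ cₜ⁻¹ < ∞` because
`cₜ = t^(1+s)` with `s > 0`. By Chebyshev's inequality the probability in question is `O(1/n)`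
uniformly in `T`. -/

open MeasureTheory ProbabilityTheory Filter

/-- The Euclidean (`ℓ²`) norm of a vector in `ℝ^p`. -/
noncomputable def l2norm {p : ℕ} (x : Fin p → ℝ) : ℝ := Real.sqrt (∑ i, (x i) ^ 2)

open Real Set
open scoped ENNReal Topology

section L2Norm

variable {p : ℕ}

lemma l2norm_sq (x : Fin p → ℝ) : l2norm x ^ 2 = ∑ i, x i ^ 2 :=
  sq_sqrt (Finset.sum_nonneg fun _ _ => sq_nonneg _)

lemma l2norm_nonneg (x : Fin p → ℝ) : 0 ≤ l2norm x := sqrt_nonneg _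

lemma sq_apply_le_l2norm_sq (x : Fin p → ℝ) (i : Fin p) : x i ^ 2 ≤ l2norm x ^ 2 := by
  rw [l2norm_sq]
  exact Finset.single_le_sum (f := fun j => x j ^ 2) (fun j _ => sq_nonneg _) (Finset.mem_univ i)

lemma continuous_l2norm : Continuous (l2norm : (Fin p → ℝ) → ℝ) := by
  unfold l2norm
  fun_prop

end L2Norm

lemma rpow_neg_two_div_le_inv {b κ γ : ℝ} (hb : 1 ≤ b) (hγ : 0 < γ) (hκγ : γ / 2 ≤ κ) :
    (b ^ κ) ^ (-2 / γ) ≤ b⁻¹ := by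
  rw [← rpow_mul (by positivity), ← rpow_neg_one]
  refine rpow_le_rpow_of_exponent_le hb ?_
  rw [mul_div_assoc', div_le_iff₀ hγ]
  linarith

lemma summable_inv_of_eq_rpow {c : ℕ → ℝ} {q : ℝ} (hq : 1 < q)
    (hc : ∀ t : ℕ, 1 ≤ t → c t = (t : ℝ) ^ q) : Summable fun t => (c t)⁻¹ :=
  (summable_nat_rpow_inv.2 hq).congr_cofinite <| Nat.cofinite_eq_atTop ▸
    (eventually_ge_atTop 1).mono fun t ht => by simp only [hc t ht]

lemma tendsto_limsup_zero_of_le_mul_inv {f : ℕ → ℕ → ℝ} {K : ℝ} (hf0 : ∀ n T, 0 ≤ f n T)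
    (hf : ∀ n, 1 ≤ n → ∀ T, f n T ≤ K * (n : ℝ)⁻¹) :
    Tendsto (fun n => limsup (f n) atTop) atTop (𝓝 0) := by
  refine squeeze_zero' ?_ ?_ (by simpa using tendsto_inv_atTop_nhds_zero_nat.const_mul K)
  · filter_upwards [eventually_ge_atTop 1] with n hn
    exact le_limsup_of_frequently_le (Frequently.of_forall (hf0 n))
      (isBoundedUnder_of ⟨_, hf n hn⟩)
  · filter_upwards [eventually_ge_atTop 1] with n hn
    exact limsup_le_of_le (isBoundedUnder_of ⟨0, hf0 n⟩).isCoboundedUnder_le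
      (Eventually.of_forall (hf n hn))

section Probability

variable {Ω : Type*} {m mΩ : MeasurableSpace Ω} {μ : Measure Ω}

theorem measure_le_ofReal_of_condExp_indicator_le [IsProbabilityMeasure μ] (hm : m ≤ mΩ)
    {A : Set Ω} (hA : MeasurableSet A) {b : ℝ}
    (h : ∀ᵐ ω ∂μ, μ[A.indicator (fun _ => (1 : ℝ)) | m] ω ≤ b) :
    μ A ≤ ENNReal.ofReal b := by
  have hA_le : μ.real A ≤ b :=
    calc μ.real A = ∫ ω, μ[A.indicator (fun _ => (1 : ℝ)) | m] ω ∂μ := by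
          rw [integral_condExp hm, integral_indicator_const (1 : ℝ) hA, smul_eq_mul, mul_one]
      _ ≤ ∫ _, b ∂μ := integral_mono_ae integrable_condExp (integrable_const b) h
      _ = b := by simp
  exact (ENNReal.le_ofReal_iff_toReal_le (measure_ne_top μ A)
    (measureReal_nonneg.trans hA_le)).2 hA_le

theorem lintegral_rpow_le_of_measure_lt_le_exp {Y : Ω → ℝ} (hY0 : 0 ≤ᵐ[μ] Y)
    (hY : AEMeasurable Y μ) {q C a γ : ℝ} (hq : 0 < q) (hC : 0 ≤ C) (ha : 0 < a) (hγ : 0 < γ)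
    (htail : ∀ u, 0 < u → μ {ω | u < Y ω} ≤ ENNReal.ofReal (C * exp (-a * u ^ γ))) :
    ∫⁻ ω, ENNReal.ofReal (Y ω ^ q) ∂μ ≤
      ENNReal.ofReal (q * C * Gamma (q / γ) / γ * a ^ (-q / γ)) := by
  have hint := integrableOn_rpow_mul_exp_neg_mul_rpow (by linarith : -1 < q - 1) hγ ha
  have hI := integral_rpow_mul_exp_neg_mul_rpow hγ (by linarith : -1 < q - 1) ha
  rw [sub_add_cancel] at hI
  calc ∫⁻ ω, ENNReal.ofReal (Y ω ^ q) ∂μ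
      = ENNReal.ofReal q * ∫⁻ u in Ioi 0, μ {ω | u < Y ω} * ENNReal.ofReal (u ^ (q - 1)) :=
        lintegral_rpow_eq_lintegral_meas_lt_mul μ hY0 hY hq
    _ ≤ ENNReal.ofReal q * ∫⁻ u in Ioi 0,
          ENNReal.ofReal C * ENNReal.ofReal (u ^ (q - 1) * exp (-a * u ^ γ)) := by
        refine mul_le_mul_right (setLIntegral_mono' measurableSet_Ioi fun u (hu : 0 < u) => ?_) _
        rw [← ENNReal.ofReal_mul hC, ← mul_assoc, mul_comm C, mul_assoc,
          ENNReal.ofReal_mul (by positivity), mul_comm]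
        exact mul_le_mul_right (htail u hu) _
    _ = ENNReal.ofReal (q * C * Gamma (q / γ) / γ * a ^ (-q / γ)) := by
        rw [lintegral_const_mul' _ _ ENNReal.ofReal_ne_top,
          ← ofReal_integral_eq_lintegral_ofReal hint (ae_restrict_of_forall_mem measurableSet_Ioi
            fun u (hu : 0 < u) => by positivity), hI, ← ENNReal.ofReal_mul hC,
          ← ENNReal.ofReal_mul hq.le]
        congr 1
        ring

theorem integral_sq_le_of_measure_lt_le_exp {Y : Ω → ℝ} (hY0 : 0 ≤ᵐ[μ] Y)
    (hY : AEMeasurable Y μ) {C a γ : ℝ} (hC : 0 ≤ C) (ha : 0 < a) (hγ : 0 < γ)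
    (htail : ∀ u, 0 < u → μ {ω | u < Y ω} ≤ ENNReal.ofReal (C * exp (-a * u ^ γ))) :
    Integrable (fun ω => Y ω ^ 2) μ ∧
      ∫ ω, Y ω ^ 2 ∂μ ≤ 2 * C * Gamma (2 / γ) / γ * a ^ (-2 / γ) := by
  have hmom := lintegral_rpow_le_of_measure_lt_le_exp hY0 hY two_pos hC ha hγ htail
  simp only [rpow_two] at hmom
  have hY2 : AEStronglyMeasurable (fun ω => Y ω ^ 2) μ := (hY.pow_const 2).aestronglyMeasurable
  have hY20 : 0 ≤ᵐ[μ] fun ω => Y ω ^ 2 := ae_of_all _ fun ω => sq_nonneg _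
  refine ⟨(lintegral_ofReal_ne_top_iff_integrable hY2 hY20).1
    (ne_top_of_le_ne_top ENNReal.ofReal_ne_top hmom), ?_⟩
  rw [integral_eq_lintegral_of_nonneg_ae hY20 hY2]
  exact ENNReal.toReal_le_of_le_ofReal (by positivity) hmom

theorem integral_sq_le_of_condExp_tail_le [IsProbabilityMeasure μ] (hm : m ≤ mΩ)
    {Y : Ω → ℝ} (hY : Measurable Y) (hY0 : 0 ≤ Y) {C₁ C₂ γ κ b : ℝ}
    (hC₁ : 0 ≤ C₁) (hC₂ : 0 < C₂) (hγ : 0 < γ) (hκγ : γ / 2 ≤ κ) (hb : 1 ≤ b)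
    (htail : ∀ δ, 0 < δ → ∀ᵐ ω ∂μ,
      μ[{ω' | δ < Y ω'}.indicator (fun _ => (1 : ℝ)) | m] ω ≤ C₁ * exp (-C₂ * b ^ κ * δ ^ γ)) :
    Integrable (fun ω => Y ω ^ 2) μ ∧
      ∫ ω, Y ω ^ 2 ∂μ ≤ 2 * C₁ * Gamma (2 / γ) / γ * C₂ ^ (-2 / γ) * b⁻¹ := by
  have ha : 0 < C₂ * b ^ κ := by positivity
  obtain ⟨hint, hle⟩ := integral_sq_le_of_measure_lt_le_exp (ae_of_all _ hY0) hY.aemeasurable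
    hC₁ ha hγ fun u hu => by
      simpa only [neg_mul] using measure_le_ofReal_of_condExp_indicator_le hm
        (measurableSet_lt measurable_const hY) (htail u hu)
  refine ⟨hint, hle.trans ?_⟩
  rw [mul_rpow hC₂.le (by positivity), ← mul_assoc]
  gcongr
  exact rpow_neg_two_div_le_inv hb hγ hκγ

theorem measureReal_ge_le_integral_sq_div_sq {X : Ω → ℝ} (hX0 : 0 ≤ X)
    (hX : Integrable (fun ω => X ω ^ 2) μ) {δ : ℝ} (hδ : 0 < δ) :
    μ.real {ω | δ ≤ X ω} ≤ (∫ ω, X ω ^ 2 ∂μ) / δ ^ 2 := by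
  have hset : {ω | δ ≤ X ω} = {ω | δ ^ 2 ≤ X ω ^ 2} := by
    ext ω
    exact (pow_le_pow_iff_left₀ hδ.le (hX0 ω) two_ne_zero).symm
  rw [hset, le_div_iff₀ (by positivity), mul_comm]
  exact mul_meas_ge_le_integral_of_nonneg (ae_of_all _ fun ω => sq_nonneg _) hX _

theorem integral_mul_eq_zero_of_condExp_eq_zero (hm : m ≤ mΩ)
    [SigmaFinite (μ.trim hm)] {X D : Ω → ℝ} (hX : StronglyMeasurable[m] X)
    (hXD : Integrable (X * D) μ) (hD : Integrable D μ) (hD0 : μ[D | m] =ᵐ[μ] 0) :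
    ∫ ω, X ω * D ω ∂μ = 0 := by
  calc ∫ ω, X ω * D ω ∂μ = ∫ ω, μ[X * D | m] ω ∂μ := (integral_condExp hm).symm
    _ = ∫ ω, X ω * 0 ∂μ := by
        refine integral_congr_ae ?_
        filter_upwards [condExp_mul_of_stronglyMeasurable_left hX hXD hD, hD0] with ω h h0
        rw [h, Pi.mul_apply, h0, Pi.zero_apply]
    _ = 0 := by simp

theorem memLp_two_apply_of_integrable_l2norm_sq {p : ℕ} {X : Ω → Fin p → ℝ}
    (hX : AEStronglyMeasurable X μ) (hX2 : Integrable (fun ω => l2norm (X ω) ^ 2) μ) (i : Fin p) :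
    MemLp (fun ω => X ω i) 2 μ := by
  have hXi : AEStronglyMeasurable (fun ω => X ω i) μ :=
    (continuous_apply i).comp_aestronglyMeasurable hX
  refine (memLp_two_iff_integrable_sq hXi).2 (hX2.mono' (hXi.pow 2) (ae_of_all _ fun ω => ?_))
  rw [Real.norm_of_nonneg (sq_nonneg _)]
  exact sq_apply_le_l2norm_sq _ i

theorem memLp_two_of_memLp_sub_succ {Z : ℕ → Ω → ℝ} (hZ0 : MemLp (Z 0) 2 μ)
    (hinc : ∀ t, MemLp (Z (t + 1) - Z t) 2 μ) (t : ℕ) : MemLp (Z t) 2 μ := by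
  induction t with
  | zero => exact hZ0
  | succ t ih => simpa using ih.add (hinc t)

variable {ℱ : Filtration ℕ mΩ}

theorem integral_sq_eq_add_sum_integral_sq_sub [IsFiniteMeasure μ] {Z : ℕ → Ω → ℝ}
    (hZ : Adapted ℱ Z) (hZ0 : MemLp (Z 0) 2 μ) (hinc : ∀ t, MemLp (Z (t + 1) - Z t) 2 μ)
    (hmart : ∀ t, μ[Z (t + 1) | ℱ t] =ᵐ[μ] Z t) (T : ℕ) :
    ∫ ω, Z T ω ^ 2 ∂μ = ∫ ω, Z 0 ω ^ 2 ∂μ +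
      ∑ t ∈ Finset.range T, ∫ ω, (Z (t + 1) ω - Z t ω) ^ 2 ∂μ := by
  have hL2 := memLp_two_of_memLp_sub_succ hZ0 hinc
  induction T with
  | zero => simp
  | succ T ih =>
    have hcross : ∫ ω, Z T ω * (Z (T + 1) ω - Z T ω) ∂μ = 0 := by
      have hZT : StronglyMeasurable[ℱ T] (Z T) := (hZ T).stronglyMeasurable
      refine integral_mul_eq_zero_of_condExp_eq_zero (D := Z (T + 1) - Z T) (ℱ.le T) hZT
        ((hL2 T).integrable_mul (hinc T)) ((hinc T).integrable one_le_two) ?_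
      filter_upwards [condExp_sub ((hL2 (T + 1)).integrable one_le_two)
        ((hL2 T).integrable one_le_two) (ℱ T), hmart T] with ω hsub hω
      rw [hsub, Pi.sub_apply, hω,
        condExp_of_stronglyMeasurable (ℱ.le T) hZT ((hL2 T).integrable one_le_two)]
      simp
    have hexpand : ∀ ω, Z (T + 1) ω ^ 2 =
        Z T ω ^ 2 + (2 * (Z T ω * (Z (T + 1) ω - Z T ω)) + (Z (T + 1) ω - Z T ω) ^ 2) :=
      fun ω => by ring
    have hZ2 : Integrable (fun ω => Z T ω ^ 2) μ := (hL2 T).integrable_sq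
    have hZD : Integrable (fun ω => Z T ω * (Z (T + 1) ω - Z T ω)) μ :=
      (hL2 T).integrable_mul (hinc T)
    have hD2 : Integrable (fun ω => (Z (T + 1) ω - Z T ω) ^ 2) μ := (hinc T).integrable_sq
    have hrest : Integrable
        (fun ω => 2 * (Z T ω * (Z (T + 1) ω - Z T ω)) + (Z (T + 1) ω - Z T ω) ^ 2) μ :=
      (hZD.const_mul 2).add hD2
    simp_rw [hexpand]
    rw [integral_add hZ2 hrest, integral_add (hZD.const_mul 2) hD2,
      integral_const_mul, hcross, ih, Finset.sum_range_succ]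
    ring

theorem condExp_apply_sub_const_ae_eq [IsFiniteMeasure μ] (hm : m ≤ mΩ) {p : ℕ}
    {X Y : Ω → Fin p → ℝ} (hX : Integrable X μ) (hXY : μ[X | m] =ᵐ[μ] Y) (i : Fin p) (a : ℝ) :
    μ[fun ω => X ω i - a | m] =ᵐ[μ] fun ω => Y ω i - a := by
  filter_upwards [(ContinuousLinearMap.proj i).comp_condExp_add_const_comm hm hX (-a), hXY]
    with ω hproj hω
  simp only [ContinuousLinearMap.proj_apply, ← sub_eq_add_neg] at hproj
  rw [← hproj, hω]

theorem integral_l2norm_sq_sub_eq_sum [IsFiniteMeasure μ] {p : ℕ} {θ : ℕ → Ω → Fin p → ℝ}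
    {θ₀ : Fin p → ℝ}
    (hθ : Adapted ℱ θ) (h0 : ∀ᵐ ω ∂μ, θ 0 ω = θ₀)
    (hinc : ∀ t, Integrable (fun ω => l2norm (θ (t + 1) ω - θ t ω) ^ 2) μ)
    (hmart : ∀ t, μ[θ (t + 1) | ℱ t] =ᵐ[μ] θ t) (T : ℕ) :
    Integrable (fun ω => l2norm (θ T ω - θ₀) ^ 2) μ ∧
      ∫ ω, l2norm (θ T ω - θ₀) ^ 2 ∂μ =
        ∑ t ∈ Finset.range T, ∫ ω, l2norm (θ (t + 1) ω - θ t ω) ^ 2 ∂μ := by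
  set Z : Fin p → ℕ → Ω → ℝ := fun i t ω => θ t ω i - θ₀ i
  have hZ : ∀ i, Adapted ℱ (Z i) := fun i t =>
    show Measurable[ℱ t] fun ω => θ t ω i - θ₀ i from
      ((measurable_pi_apply i).comp (hθ t)).sub_const _
  have hZ0 : ∀ i, Z i 0 =ᵐ[μ] 0 := fun i => by
    filter_upwards [h0] with ω hω
    simp [Z, hω]
  have hZinc : ∀ i t ω, Z i (t + 1) ω - Z i t ω = (θ (t + 1) ω - θ t ω) i := fun i t ω => by
    simp [Z]
  have hθm : ∀ t, Measurable (θ t) := fun t => (hθ t).mono (ℱ.le t) le_rfl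
  have hinc' : ∀ i t, MemLp (Z i (t + 1) - Z i t) 2 μ := fun i t =>
    (memLp_two_apply_of_integrable_l2norm_sq ((hθm (t + 1)).sub (hθm t)).aestronglyMeasurable
      (hinc t) i).ae_eq (ae_of_all _ fun ω => (hZinc i t ω).symm)
  have hL2 : ∀ i t, MemLp (Z i t) 2 μ := fun i =>
    memLp_two_of_memLp_sub_succ ((memLp_const 0).ae_eq (hZ0 i).symm) (hinc' i)
  have hθint : ∀ t, Integrable (θ t) μ := fun t => Integrable.of_eval fun i =>
    (((hL2 i t).integrable one_le_two).add (integrable_const (θ₀ i))).congr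
      (ae_of_all _ fun ω => by simp [Z])
  have hmart' : ∀ i t, μ[Z i (t + 1) | ℱ t] =ᵐ[μ] Z i t := fun i t =>
    condExp_apply_sub_const_ae_eq (ℱ.le t) (hθint (t + 1)) (hmart t) i (θ₀ i)
  have hsq : ∀ t ω, l2norm (θ t ω - θ₀) ^ 2 = ∑ i, Z i t ω ^ 2 := fun t ω => by
    simp [l2norm_sq, Z]
  refine ⟨?_, ?_⟩
  · simp_rw [hsq]
    exact integrable_finsetSum _ fun i _ => (hL2 i T).integrable_sq
  calc ∫ ω, l2norm (θ T ω - θ₀) ^ 2 ∂μ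
      = ∑ i, ∫ ω, Z i T ω ^ 2 ∂μ := by
        simp_rw [hsq]
        exact integral_finsetSum _ fun i _ => (hL2 i T).integrable_sq
    _ = ∑ i, ∑ t ∈ Finset.range T, ∫ ω, (Z i (t + 1) ω - Z i t ω) ^ 2 ∂μ := by
        refine Finset.sum_congr rfl fun i _ => ?_
        rw [integral_sq_eq_add_sum_integral_sq_sub (hZ i) (hL2 i 0) (hinc' i) (hmart' i),
          integral_congr_ae (g := fun _ => (0 : ℝ)) ((hZ0 i).mono fun ω hω => by simp [hω]),
          integral_zero, zero_add]
    _ = ∑ t ∈ Finset.range T, ∫ ω, l2norm (θ (t + 1) ω - θ t ω) ^ 2 ∂μ := by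
        rw [Finset.sum_comm]
        refine Finset.sum_congr rfl fun t _ => ?_
        simp_rw [l2norm_sq, ← hZinc]
        exact (integral_finsetSum _ fun i _ => (hinc' i t).integrable_sq).symm

theorem measureReal_l2norm_sub_ge_le [IsProbabilityMeasure μ] {p : ℕ}
    {θ : ℕ → Ω → Fin p → ℝ} {θ₀ : Fin p → ℝ} {C₁ C₂ γ κ : ℝ} {b : ℕ → ℝ} (hC₁ : 0 ≤ C₁)
    (hC₂ : 0 < C₂) (hγ : 0 < γ) (hκγ : γ / 2 ≤ κ) (hb : ∀ t, 1 ≤ b t) (hθ : Adapted ℱ θ)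
    (h0 : ∀ᵐ ω ∂μ, θ 0 ω = θ₀)
    (htail : ∀ t δ, 0 < δ → ∀ᵐ ω ∂μ,
      μ[{ω' | δ < l2norm (θ (t + 1) ω' - θ t ω')}.indicator (fun _ => (1 : ℝ)) | ℱ t] ω ≤
        C₁ * exp (-C₂ * b t ^ κ * δ ^ γ))
    (hmart : ∀ t, μ[θ (t + 1) | ℱ t] =ᵐ[μ] θ t) (T : ℕ) {δ : ℝ} (hδ : 0 < δ) :
    μ.real {ω | δ ≤ l2norm (θ T ω - θ₀)} ≤
      2 * C₁ * Gamma (2 / γ) / γ * C₂ ^ (-2 / γ) * (∑ t ∈ Finset.range T, (b t)⁻¹) / δ ^ 2 := by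
  have hθm : ∀ t, Measurable (θ t) := fun t => (hθ t).mono (ℱ.le t) le_rfl
  have hstep t := integral_sq_le_of_condExp_tail_le (ℱ.le t)
    (continuous_l2norm.measurable.comp ((hθm (t + 1)).sub (hθm t))) (fun ω => l2norm_nonneg _)
    hC₁ hC₂ hγ hκγ (hb t) (htail t)
  obtain ⟨hint, hpyth⟩ := integral_l2norm_sq_sub_eq_sum hθ h0 (fun t => (hstep t).1) hmart T
  calc μ.real {ω | δ ≤ l2norm (θ T ω - θ₀)}
      ≤ (∫ ω, l2norm (θ T ω - θ₀) ^ 2 ∂μ) / δ ^ 2 :=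
        measureReal_ge_le_integral_sq_div_sq (fun ω => l2norm_nonneg _) hint hδ
    _ ≤ (∑ t ∈ Finset.range T, 2 * C₁ * Gamma (2 / γ) / γ * C₂ ^ (-2 / γ) * (b t)⁻¹) /
          δ ^ 2 := by
        rw [hpyth]
        gcongr with t
        exact (hstep t).2
    _ = _ := by rw [Finset.mul_sum]

end Probability

theorem stmt_5_general
    {Ω : Type} [mΩ : MeasurableSpace Ω] (μ : Measure Ω) [IsProbabilityMeasure μ]
    (p : ℕ) (θstar : Fin p → ℝ)
    (C₁ C₂ γ κ s : ℝ) (hC₁ : 0 < C₁) (hC₂ : 0 < C₂) (hγ : 0 < γ)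
    (hκγ : γ / 2 ≤ κ) (hs : 0 < s)
    (c : ℕ → ℝ) (hc0 : c 0 = 1) (hc : ∀ t : ℕ, 1 ≤ t → c t = (t : ℝ) ^ ((1 : ℝ) + s))
    (F : ℕ → Filtration ℕ mΩ)
    (θhat : ℕ → ℕ → Ω → (Fin p → ℝ))
    (hadapt : ∀ n, Adapted (F n) (θhat n))
    (h0 : ∀ n, ∀ᵐ ω ∂μ, θhat n 0 ω = θstar)
    (htail : ∀ n : ℕ, 1 ≤ n → ∀ t : ℕ, 1 ≤ t → ∀ δ' : ℝ, 0 < δ' →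
      ∀ᵐ ω ∂μ,
        (μ[Set.indicator {ω' | δ' < l2norm (θhat n t ω' - θhat n (t - 1) ω')}
            (fun _ => (1 : ℝ)) | (F n) (t - 1)]) ω
          ≤ C₁ * Real.exp (-C₂ * (c (t - 1) * n) ^ κ * δ' ^ γ))
    (hmart : ∀ n : ℕ, 1 ≤ n → ∀ t : ℕ, 1 ≤ t →
      μ[θhat n t | (F n) (t - 1)] =ᵐ[μ] θhat n (t - 1)) :
    ∀ δ : ℝ, 0 < δ →
      Tendsto (fun n : ℕ =>
          limsup (fun T : ℕ => (μ {ω | δ ≤ l2norm (θhat n T ω - θstar)}).toReal) atTop)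
        atTop (nhds 0) := by
  intro δ hδ
  have hc1 : ∀ t, 1 ≤ c t := by
    rintro (_ | t)
    · exact hc0.ge
    · rw [hc _ t.succ_pos]
      exact one_le_rpow (by simp) (by linarith)
  set M := 2 * C₁ * Gamma (2 / γ) / γ * C₂ ^ (-2 / γ)
  refine tendsto_limsup_zero_of_le_mul_inv (K := M * (∑' t, (c t)⁻¹) / δ ^ 2)
    (fun n T => ENNReal.toReal_nonneg) fun n hn T => ?_
  have hn1 : (1 : ℝ) ≤ n := by exact_mod_cast hn
  calc (μ {ω | δ ≤ l2norm (θhat n T ω - θstar)}).toReal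
      ≤ M * (∑ t ∈ Finset.range T, (c t * n)⁻¹) / δ ^ 2 :=
        measureReal_l2norm_sub_ge_le hC₁.le hC₂ hγ hκγ
          (fun t => one_le_mul_of_one_le_of_one_le (hc1 t) hn1) (hadapt n) (h0 n)
          (fun t δ' hδ' => by
            simpa only [Nat.add_sub_cancel] using htail n hn (t + 1) t.succ_pos δ' hδ')
          (fun t => by simpa only [Nat.add_sub_cancel] using hmart n hn (t + 1) t.succ_pos) T hδ
    _ = M * (∑ t ∈ Finset.range T, (c t)⁻¹) / δ ^ 2 * (n : ℝ)⁻¹ := by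
        simp_rw [mul_inv, ← Finset.sum_mul]
        ring
    _ ≤ M * (∑' t, (c t)⁻¹) / δ ^ 2 * (n : ℝ)⁻¹ := by
        gcongr
        exact (summable_inv_of_eq_rpow (by linarith) hc).sum_le_tsum _
          fun t _ => inv_nonneg.2 (zero_le_one.trans (hc1 t))

/-- For recursive estimation processes `(θ̂_t^{(n)})` with `θ̂_0^{(n)} = θ*`,
per-step conditional tail bound with rate function `r(m) = m^κ` where `κ ≥ γ/2`, sample sizes
`n_0 = n`, `n_t = c_t n` with `c_t = t^{1+s}` (`s > 0`), which moreover form a martingale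
(`E[θ̂_t | F_{t−1}] = θ̂_{t−1}` a.s.), for every `δ > 0`:
`lim_{n→∞} limsup_{T→∞} P(‖θ̂_T^{(n)} − θ*‖₂ ≥ δ) = 0`. -/
theorem stmt_5
    {Ω : Type} [mΩ : MeasurableSpace Ω] (μ : Measure Ω) [IsProbabilityMeasure μ]
    (p : ℕ) (hp : 1 ≤ p) (θstar : Fin p → ℝ)
    (C₁ C₂ γ κ s : ℝ) (hC₁ : 0 < C₁) (hC₂ : 0 < C₂) (hγ : 0 < γ)
    (hκγ : γ / 2 ≤ κ) (hs : 0 < s)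
    (c : ℕ → ℝ) (hc0 : c 0 = 1) (hc : ∀ t : ℕ, 1 ≤ t → c t = (t : ℝ) ^ ((1 : ℝ) + s))
    (F : ℕ → Filtration ℕ mΩ)
    (θhat : ℕ → ℕ → Ω → (Fin p → ℝ))
    (hadapt : ∀ n, Adapted (F n) (θhat n))
    (h0 : ∀ n, ∀ᵐ ω ∂μ, θhat n 0 ω = θstar)
    (htail : ∀ n : ℕ, 1 ≤ n → ∀ t : ℕ, 1 ≤ t → ∀ δ' : ℝ, 0 < δ' →
      ∀ᵐ ω ∂μ,
        (μ[Set.indicator {ω' | δ' < l2norm (θhat n t ω' - θhat n (t - 1) ω')}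
            (fun _ => (1 : ℝ)) | (F n) (t - 1)]) ω
          ≤ C₁ * Real.exp (-C₂ * (c (t - 1) * n) ^ κ * δ' ^ γ))
    (hmart : ∀ n : ℕ, 1 ≤ n → ∀ t : ℕ, 1 ≤ t →
      μ[θhat n t | (F n) (t - 1)] =ᵐ[μ] θhat n (t - 1)) :
    ∀ δ : ℝ, 0 < δ →
      Tendsto (fun n : ℕ =>
          limsup (fun T : ℕ => (μ {ω | δ ≤ l2norm (θhat n T ω - θstar)}).toReal) atTop)
        atTop (nhds 0) :=
  stmt_5_general (mΩ := mΩ) μ p θstar C₁ C₂ γ κ s hC₁ hC₂ hγ hκγ hs c hc0 hc F θhat hadapt h0 htail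
    hmart
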